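/- In the bipartite hexagon model (n = 6, r = sqrt(sec(π/6))), the entangled state Φ_III = [[−1/(3r²), −1/r⁴, 2/(3r³)], [−1/r⁴, 0, 1/(2r)], [−2/(3r³), −1/(2r), 1]] exhibits Hardy's nonlocality with Alice's measurements M₁ = (e₄, e₁), M₂ = (e₂, e₅) and Bob's measurements N₁ = (e₁, e₄), N₂ = (e₅, e₂): the zero conditions e₄ᵀ Φ_III e₅ = 0, e₂ᵀ Φ_III e₁ = 0, e₅ᵀ Φ_III e₂ = 0 hold, and the success probability e₄ᵀ Φ_III e₁ equals 1/8. -/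
import Mathlib


open Real Matrix

/-- `r = sqrt(sec(π/6))` for the hexagon model. -/
noncomputable def rH : ℝ := Real.sqrt (1 / Real.cos (Real.pi / 6))

/-- Extremal effects of the hexagon model:
`e_i = (1/2)·(r cos((2i−1)π/6), r sin((2i−1)π/6), 1)ᵀ`. -/
noncomputable def eH (i : ℕ) : Fin 3 → ℝ :=
  (1 / 2 : ℝ) •
    ![rH * Real.cos ((2 * (i : ℝ) - 1) * Real.pi / 6),
      rH * Real.sin ((2 * (i : ℝ) - 1) * Real.pi / 6), 1]

/-- Probability of local effects `E` (Alice) and `F` (Bob) on a bipartite state `Φ`: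
`P_Φ(E,F) = Eᵀ Φ F`. -/
noncomputable def prob (Φ : Matrix (Fin 3) (Fin 3) ℝ) (E F : Fin 3 → ℝ) : ℝ :=
  E ⬝ᵥ Φ.mulVec F

/-- The entangled state `Φ_III` of the bipartite hexagon model. -/
noncomputable def PhiIII : Matrix (Fin 3) (Fin 3) ℝ :=
  !![-1 / (3 * rH ^ 2), -1 / rH ^ 4, 2 / (3 * rH ^ 3);
     -1 / rH ^ 4, 0, 1 / (2 * rH);
     -2 / (3 * rH ^ 3), -1 / (2 * rH), 1]

/-- `Φ_III` exhibits Hardy's nonlocality with Alice's measurements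
`M₁ = (e₄, e₁)`, `M₂ = (e₂, e₅)` and Bob's measurements `N₁ = (e₁, e₄)`, `N₂ = (e₅, e₂)`;
the zero conditions hold and the success probability is `1/8`. -/
theorem hexagon_PhiIII_hardy :
    prob PhiIII (eH 4) (eH 5) = 0 ∧
    prob PhiIII (eH 2) (eH 1) = 0 ∧
    prob PhiIII (eH 5) (eH 2) = 0 ∧
    prob PhiIII (eH 4) (eH 1) = 1 / 8 := by
  have hs : Real.sqrt 3 ^ 2 = 3 := Real.sq_sqrt (by norm_num)
  have hs0 : (0:ℝ) < Real.sqrt 3 := Real.sqrt_pos.mpr (by norm_num)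
  have hr0 : (0:ℝ) < rH := Real.sqrt_pos.mpr (by rw [Real.cos_pi_div_six]; positivity)
  have hr2 : rH ^ 2 = 2 / Real.sqrt 3 := by
    rw [rH, Real.sq_sqrt (by rw [Real.cos_pi_div_six]; positivity),
      Real.cos_pi_div_six, one_div_div]
  have h2s : rH ^ 2 * Real.sqrt 3 = 2 := by
    rw [hr2]; field_simp
  have h4 : rH ^ 4 = 4 / 3 := by
    have : rH ^ 4 = (rH ^ 2) ^ 2 := by ring
    rw [this, hr2, div_pow, hs]; norm_num
  have hrne : rH ≠ 0 := ne_of_gt hr0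
  -- trig values
  have c1 : Real.cos ((2 * (1:ℝ) - 1) * Real.pi / 6) = Real.sqrt 3 / 2 := by
    rw [show (2 * (1:ℝ) - 1) * Real.pi / 6 = Real.pi / 6 by ring, Real.cos_pi_div_six]
  have s1 : Real.sin ((2 * (1:ℝ) - 1) * Real.pi / 6) = 1 / 2 := by
    rw [show (2 * (1:ℝ) - 1) * Real.pi / 6 = Real.pi / 6 by ring, Real.sin_pi_div_six]
  have c2 : Real.cos ((2 * (2:ℝ) - 1) * Real.pi / 6) = 0 := by
    rw [show (2 * (2:ℝ) - 1) * Real.pi / 6 = Real.pi / 2 by ring, Real.cos_pi_div_two]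
  have s2 : Real.sin ((2 * (2:ℝ) - 1) * Real.pi / 6) = 1 := by
    rw [show (2 * (2:ℝ) - 1) * Real.pi / 6 = Real.pi / 2 by ring, Real.sin_pi_div_two]
  have c4 : Real.cos ((2 * (4:ℝ) - 1) * Real.pi / 6) = -(Real.sqrt 3 / 2) := by
    rw [show (2 * (4:ℝ) - 1) * Real.pi / 6 = Real.pi / 6 + Real.pi by ring,
      Real.cos_add_pi, Real.cos_pi_div_six]
  have s4 : Real.sin ((2 * (4:ℝ) - 1) * Real.pi / 6) = -(1 / 2) := by
    rw [show (2 * (4:ℝ) - 1) * Real.pi / 6 = Real.pi / 6 + Real.pi by ring,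
      Real.sin_add_pi, Real.sin_pi_div_six]
  have c5 : Real.cos ((2 * (5:ℝ) - 1) * Real.pi / 6) = 0 := by
    rw [show (2 * (5:ℝ) - 1) * Real.pi / 6 = Real.pi / 2 + Real.pi by ring,
      Real.cos_add_pi, Real.cos_pi_div_two, neg_zero]
  have s5 : Real.sin ((2 * (5:ℝ) - 1) * Real.pi / 6) = -1 := by
    rw [show (2 * (5:ℝ) - 1) * Real.pi / 6 = Real.pi / 2 + Real.pi by ring,
      Real.sin_add_pi, Real.sin_pi_div_two]
  -- matrix entry values (division-free up to numeric denominators)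
  have hm00 : (-1 : ℝ) / (3 * rH ^ 2) = -(Real.sqrt 3 / 6) := by
    rw [div_eq_iff (by positivity : (3:ℝ) * rH ^ 2 ≠ 0)]
    linear_combination h2s / 2
  have hm01 : (-1 : ℝ) / rH ^ 4 = -(3 / 4) := by rw [h4]; norm_num
  have hm02 : (2 : ℝ) / (3 * rH ^ 3) = rH / 2 := by
    rw [div_eq_div_iff (by positivity) (by norm_num)]
    linear_combination -3 * h4
  have hm12 : (1 : ℝ) / (2 * rH) = rH * Real.sqrt 3 / 4 := by
    rw [div_eq_div_iff (by positivity) (by norm_num)]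
    linear_combination -2 * h2s
  have hm20 : (-2 : ℝ) / (3 * rH ^ 3) = -(rH / 2) := by
    rw [div_eq_iff (by positivity : (3:ℝ) * rH ^ 3 ≠ 0)]
    linear_combination 3/2 * h4
  have hm21 : (-1 : ℝ) / (2 * rH) = -(rH * Real.sqrt 3 / 4) := by
    rw [div_eq_iff (by positivity : (2:ℝ) * rH ≠ 0)]
    linear_combination h2s / 2
  refine ⟨?_, ?_, ?_, ?_⟩ <;>
  · simp only [prob, PhiIII, eH, Matrix.mulVec, dotProduct, Fin.sum_univ_three,
      Nat.cast_ofNat, Nat.cast_one, Pi.smul_apply, smul_eq_mul,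
      Matrix.cons_val_zero, Matrix.cons_val_one, Matrix.head_cons,
      Matrix.cons_val_two, Matrix.tail_cons, Matrix.of_apply, Matrix.cons_val',
      Matrix.empty_val', Matrix.cons_val_fin_one, Matrix.head_fin_const]
    rw [hm00, hm01, hm02, hm12, hm20, hm21]
    first
    | (rw [c4, s4, c5, s5]; linear_combination (-(1:ℝ)/8) * h2s)
    | (rw [c2, s2, c1, s1]; linear_combination (-(1:ℝ)/8) * h2s)
    | (rw [c5, s5, c2, s2]; linear_combination (-(1:ℝ)/8) * h2s)
    | (rw [c4, s4, c1, s1];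
       linear_combination (Real.sqrt 3 ^ 2 / 96 - 3/32) * h2s + (1/48 : ℝ) * hs)
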